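/- Let L : F_{q^n} → F_{q^n} be F_q-linear with kernel exactly α·F_q for some nonzero α, let α be a b-linear translator of f : F_{q^n} → F_q, let h : F_q → F_q be a bijection, and let γ ∈ F_{q^n}. Then G(x) = L(x) + γ·h(f(x)) is a permutation of F_{q^n} if and only if b ≠ 0 and γ is not in the image of L. -/

import Mathlib

/-! Write `G x = T x + h (f x) • γ`. If `γ = T z`, then `G x = T (x + h (f x) • z)`, so `G` lands in
the range of `T`, which is proper because `T` has a nonzero kernel in finite dimension. If `b = 0`,
then `G α = G 0`. Conversely, if `G x = G y` with `γ ∉ range T`, comparing the `γ`-components forces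
`f x = f y` and `T x = T y`; so `x - y = v • α`, and `f x - f y = v * b` gives `v = 0`;
injectivity suffices since `L` is finite. -/

def IsLinearTranslator {K V : Type*} [Field K] [AddCommGroup V] [Module K V]
    (f : V → K) (α : V) (b : K) : Prop :=
  ∀ (x : V) (u : K), f (x + u • α) - f x = u * b

section

variable {K V : Type*} [Field K] [AddCommGroup V] [Module K V]

theorem IsLinearTranslator.map_add_smul {f : V → K} {α : V} {b : K}
    (hf : IsLinearTranslator f α b) (x : V) (u : K) : f (x + u • α) = f x + u * b :=
  eq_add_of_sub_eq' (hf x u)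

theorem mem_range_of_add_smul_eq_add_smul {T : V →ₗ[K] V} {γ x y : V} {c d : K}
    (hxy : T x + c • γ = T y + d • γ) (hcd : c ≠ d) : γ ∈ Set.range T := by
  refine ⟨(d - c)⁻¹ • (x - y), ?_⟩
  have hT : T (x - y) = (d - c) • γ := by
    rw [map_sub, sub_smul, sub_eq_sub_iff_add_eq_add, hxy, add_comm]
  rw [map_smul, hT, smul_smul, inv_mul_cancel₀ (sub_ne_zero.mpr hcd.symm), one_smul]

theorem not_surjective_add_smul_of_mem_range [FiniteDimensional K V] {T : V →ₗ[K] V} {α γ : V}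
    (hα : α ≠ 0) (hTα : T α = 0) (hγ : γ ∈ Set.range T) (c : V → K) :
    ¬ Function.Surjective (fun x => T x + c x • γ) := by
  obtain ⟨z, rfl⟩ := hγ
  intro hG
  have hT : Function.Surjective T := fun y => by
    obtain ⟨x, rfl⟩ := hG y
    exact ⟨x + c x • z, by rw [map_add, map_smul]⟩
  exact hα (LinearMap.injective_iff_surjective.mpr hT (hTα.trans T.map_zero.symm))

theorem not_injective_add_smul_of_translator_zero {T : V →ₗ[K] V} {α : V} {f : V → K}
    (hα : α ≠ 0) (hTα : T α = 0) (hf : IsLinearTranslator f α 0) (h : K → K) (γ : V) :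
    ¬ Function.Injective (fun x => T x + h (f x) • γ) := by
  have hfα : f α = f 0 := by simpa using hf.map_add_smul 0 1
  intro hG
  exact hα (hG (by simp only [hTα, hfα, map_zero]))

theorem injective_add_smul_of_translator {T : V →ₗ[K] V} {α : V} {f : V → K} {b : K} {h : K → K}
    {γ : V} (hker : LinearMap.ker T = Submodule.span K {α}) (hf : IsLinearTranslator f α b)
    (hb : b ≠ 0) (hh : Function.Injective h) (hγ : γ ∉ Set.range T) :
    Function.Injective (fun x => T x + h (f x) • γ) := by
  intro x y hxy
  have hhf : h (f x) = h (f y) := by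
    by_contra hne
    exact hγ (mem_range_of_add_smul_eq_add_smul hxy hne)
  have hmem : x - y ∈ Submodule.span K {α} := by
    rw [← hker, LinearMap.mem_ker, map_sub, sub_eq_zero]
    simpa only [hhf, add_left_inj] using hxy
  obtain ⟨v, hv⟩ := Submodule.mem_span_singleton.mp hmem
  have hx : x = y + v • α := by rw [hv, add_sub_cancel]
  have hv0 : v * b = 0 := by
    have := hf.map_add_smul y v
    rw [← hx, hh hhf] at this
    linear_combination this.symm
  rw [hx, (mul_eq_zero.mp hv0).resolve_right hb, zero_smul, add_zero]

end

theorem stmt_19_general {K L : Type*} [Field K] [Field L] [Fintype L] [Algebra K L]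
    (T : L →ₗ[K] L) (α : L) (hα0 : α ≠ 0)
    (hker : LinearMap.ker T = Submodule.span K {α})
    (f : L → K) (b : K)
    (hb : ∀ (x : L) (u : K), f (x + u • α) - f x = u * b)
    (h : K → K) (hh : Function.Bijective h)
    (γ : L) :
    Function.Bijective (fun x : L => T x + h (f x) • γ) ↔
      (b ≠ 0 ∧ γ ∉ Set.range T) := by
  have hTα : T α = 0 := LinearMap.mem_ker.mp (hker ▸ Submodule.mem_span_singleton_self α)
  constructor
  · intro hG
    refine ⟨?_, fun hγ => not_surjective_add_smul_of_mem_range hα0 hTα hγ _ hG.2⟩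
    rintro rfl
    exact not_injective_add_smul_of_translator_zero hα0 hTα hb h γ hG.1
  · rintro ⟨hb0, hγ⟩
    exact (injective_add_smul_of_translator hker hb hb0 hh.1 hγ).bijective_of_finite

/-- Let `T` be an `F_q`-linear map on `F_{q^n}` with kernel exactly `α·F_q` (`α ≠ 0`),
`α` a `b`-linear translator of `f`, `h` a bijection of `F_q`, `γ ∈ F_{q^n}`. Then
`G(x) = T(x) + γ h(f(x))` is a permutation iff `b ≠ 0` and `γ ∉ im T`. -/
theorem stmt_19 {K L : Type*} [Field K] [Fintype K] [Field L] [Fintype L] [Algebra K L]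
    (T : L →ₗ[K] L) (α : L) (hα0 : α ≠ 0)
    (hker : LinearMap.ker T = Submodule.span K {α})
    (f : L → K) (b : K)
    (hb : ∀ (x : L) (u : K), f (x + u • α) - f x = u * b)
    (h : K → K) (hh : Function.Bijective h)
    (γ : L) :
    Function.Bijective (fun x : L => T x + h (f x) • γ) ↔
      (b ≠ 0 ∧ γ ∉ Set.range T) :=
  stmt_19_general T α hα0 hker f b hb h hh γ
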